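/- Let R be a left Noetherian ring with two-sided ideal I, and suppose the Rees algebra R* = ⊕_{n≥0} I^n is graded left Noetherian. Then for every finitely generated left R-module M there exists a submodule N ⊆ M such that N has no nonzero I-torsion elements and M/N is I-torsion. In fact one can take N = I^s M for s sufficiently large. -/

import Mathlib

def idealPow {R : Type*} [Ring R] (I : Ideal R) : ℕ → Ideal R
  | 0 => ⊤
  | n + 1 => Submodule.span R {x | ∃ a ∈ I, ∃ b ∈ idealPow I n, x = a * b}

/-!
The `I`-torsion submodule `T` of `M` is finitely generated, so `I ^ k • T = 0` for some `k`.
The heart of the proof is an Artin–Rees bound `I ^ n M ∩ T ⊆ I ^ (n - c) • T`. Choose generators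
`u₁, …, u_g` of `M`; a vector `v ∈ A ^ g` maps in degree `n` to `∑ v_{j,n} • u_j ∈ I ^ n M`.
The homogeneous vectors whose image lies in `T` span a graded submodule of `A ^ g`, which is
finitely generated because the homogeneous left ideals of `A` are, hence generated in degrees
`≤ c`; a generator of degree `d ≤ c` times an element of `A_{n-d}` maps into
`I ^ (n - d) • T ⊆ I ^ (n - c) • T`.
With `s = c + k` this gives `I ^ s M ∩ T ⊆ I ^ k • T = 0`, and `M ⧸ I ^ s M` is killed by `I ^ s`.
-/

open DirectSum

theorem idealPow_eq_pow {R : Type*} [Ring R] (I : Ideal R) [I.IsTwoSided] (n : ℕ) :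
    idealPow I n = I ^ n := by
  induction n with
  | zero => rw [Submodule.pow_zero, Ideal.one_eq_top]; rfl
  | succ n ih =>
    rw [Ideal.IsTwoSided.pow_succ, ← ih]
    refine le_antisymm (Submodule.span_le.mpr ?_) (Ideal.mul_le.mpr fun a ha b hb ↦ ?_)
    · rintro _ ⟨a, ha, b, hb, rfl⟩
      exact Ideal.mul_mem_mul ha hb
    · exact Submodule.subset_span ⟨a, ha, b, hb, rfl⟩

namespace Ideal

variable {R : Type*} [Ring R] (I : Ideal R) [I.IsTwoSided] (M : Type*) [AddCommGroup M] [Module R M]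

def powTorsion : ℕ →o Submodule R M where
  toFun n :=
    { carrier := {m | ∀ r ∈ I ^ n, r • m = 0}
      add_mem' hx hy r hr := by rw [smul_add, hx r hr, hy r hr, add_zero]
      zero_mem' r _ := smul_zero r
      smul_mem' c m hm r hr := by rw [smul_smul]; exact hm _ (mul_mem_right c _ hr) }
  monotone' _ _ hmn _ hm r hr := hm r (pow_le_pow_right hmn hr)

def torsion : Submodule R M := ⨆ n, I.powTorsion M n

theorem pow_smul_powTorsion (n : ℕ) : I ^ n • I.powTorsion M n = ⊥ :=
  eq_bot_iff.mpr <| Submodule.smul_le.mpr fun r hr _ hm ↦ (hm r hr).symm ▸ zero_mem _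

theorem exists_torsion_eq_powTorsion [IsNoetherian R M] : ∃ k, I.torsion M = I.powTorsion M k :=
  (IsNoetherian.noetherian _).stabilizes_of_iSup_eq _ rfl

variable {M} in
theorem smul_mem_pow_add_sub_smul {T : Submodule R M} {r : R} {z : M} {i n c : ℕ}
    (hr : r ∈ I ^ i) (hz : z ∈ I ^ (n - c) • T) : r • z ∈ I ^ (i + n - c) • T := by
  have hrz : r • z ∈ (I ^ i * I ^ (n - c)) • T :=
    (Submodule.mul_smul _ _ T).symm ▸ Submodule.smul_mem_smul hr hz
  rw [← IsTwoSided.pow_add] at hrz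
  exact Submodule.smul_mono_left (pow_le_pow_right (by omega)) hrz

end Ideal

namespace Submodule

variable {ι A : Type*} [DecidableEq ι] [AddMonoid ι] [Ring A] {𝒜 : ι → AddSubgroup A} [GradedRing 𝒜]

theorem fg_of_forall_proj_comp_mem (h𝒜 : ∀ J : Ideal A, J.IsHomogeneous 𝒜 → J.FG) {g : ℕ}
    (Q : Submodule A (Fin g → A)) (hQ : ∀ x ∈ Q, ∀ i, GradedRing.proj 𝒜 i ∘ x ∈ Q) : Q.FG := by
  induction g with
  | zero => exact Q.eq_bot_of_subsingleton ▸ fg_bot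
  | succ g ih =>
    let incl : (Fin g → A) →ₗ[A] (Fin (g + 1) → A) :=
      (Fin.consLinearEquiv A fun _ ↦ A).toLinearMap ∘ₗ LinearMap.inr A A _
    have hincl (x : Fin g → A) : incl x = Fin.cons 0 x := rfl
    have hhead : (Q.map (LinearMap.proj 0)).FG := by
      refine h𝒜 _ fun i ↦ ?_
      rintro _ ⟨x, hx, rfl⟩
      exact ⟨_, hQ x hx i, rfl⟩
    have htail : (Q.comap incl).FG := by
      refine ih _ fun x hx i ↦ ?_
      simpa [hincl, Fin.comp_cons] using hQ _ hx i
    have hker : LinearMap.range incl = LinearMap.ker (LinearMap.proj 0) := by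
      ext x
      refine ⟨?_, fun hx ↦ ⟨Fin.tail x, ?_⟩⟩
      · rintro ⟨y, rfl⟩
        simp [hincl]
      · rw [hincl, ← (LinearMap.mem_ker.mp hx : x 0 = 0)]
        exact Fin.cons_self_tail x
    refine fg_of_fg_map_of_fg_inf_ker _ hhead ?_
    rw [← hker, inf_comm, ← map_comap_eq]
    exact htail.map incl

variable {𝒜 : ℕ → AddSubgroup A} [GradedRing 𝒜] {g : ℕ}

theorem proj_comp_smul_of_mem {a : A} {i : ℕ} (ha : a ∈ 𝒜 i) (x : Fin g → A) (n : ℕ) :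
    GradedRing.proj 𝒜 n ∘ (a • x) = if i ≤ n then a • (GradedRing.proj 𝒜 (n - i) ∘ x) else 0 := by
  ext j
  rw [Function.comp_apply, GradedRing.proj_apply, Pi.smul_apply, smul_eq_mul,
    coe_decompose_mul_of_left_mem 𝒜 n ha]
  split_ifs <;> rfl

theorem proj_comp_mem_span {S : Set (Fin g → A)} (hS : ∀ v ∈ S, ∃ i, ∀ j, v j ∈ 𝒜 i)
    {x : Fin g → A} (hx : x ∈ span A S) (n : ℕ) : GradedRing.proj 𝒜 n ∘ x ∈ span A S := by
  induction hx using span_induction generalizing n with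
  | mem v hv =>
    obtain ⟨i, hi⟩ := hS v hv
    by_cases hin : i = n
    · have hv' : GradedRing.proj 𝒜 n ∘ v = v :=
        funext fun j ↦ decompose_of_mem_same 𝒜 (hin ▸ hi j)
      rw [hv']
      exact subset_span hv
    · have hv' : GradedRing.proj 𝒜 n ∘ v = 0 := funext fun j ↦ decompose_of_mem_ne 𝒜 (hi j) hin
      rw [hv']
      exact zero_mem _
  | zero => simp
  | add x y _ _ hx hy =>
    convert add_mem (hx n) (hy n) using 1
    exact map_add ((GradedRing.proj 𝒜 n).compLeft (Fin g)) x y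
  | smul a x _ hx =>
    induction a using DirectSum.Decomposition.inductionOn 𝒜 generalizing n with
    | zero => simp
    | homogeneous a =>
      rw [proj_comp_smul_of_mem a.2]
      split_ifs
      · exact smul_mem _ _ (hx _)
      · exact zero_mem _
    | add a b ha hb =>
      convert add_mem (ha n) (hb n) using 1
      rw [add_smul]
      exact map_add ((GradedRing.proj 𝒜 n).compLeft (Fin g)) _ _

end Submodule

section ReesEval

variable {R A M : Type*} [Ring R] [Ring A] [AddCommGroup M] [Module R M]
  {I : Ideal R} {𝒜 : ℕ → AddSubgroup A} [GradedRing 𝒜] (e : ∀ n, 𝒜 n ≃+ idealPow I n)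
  {g : ℕ} (u : Fin g → M)

def IsReesAlgebraEquiv : Prop :=
  ∀ (m n : ℕ) (x : 𝒜 m) (y : 𝒜 n),
    (e (m + n) ⟨x * y, SetLike.mul_mem_graded x.2 y.2⟩ : R) = (e m x : R) * (e n y : R)

/-- The degree `n` component of the map `A ^ g → ⨁ n, I ^ n M` of the Rees module. -/
def reesEval (n : ℕ) (v : Fin g → A) : M :=
  ∑ j, (e n (decompose 𝒜 (v j) n) : R) • u j

theorem reesEval_add (n : ℕ) (v w : Fin g → A) :
    reesEval e u n (v + w) = reesEval e u n v + reesEval e u n w := by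
  simp only [reesEval, ← Finset.sum_add_distrib, ← add_smul, Pi.add_apply, decompose_add,
    DirectSum.add_apply, map_add, Submodule.coe_add]

theorem reesEval_zero (n : ℕ) : reesEval e u n 0 = 0 := by
  simp [reesEval]

theorem reesEval_of_mem {n : ℕ} (w : Fin g → 𝒜 n) :
    reesEval e u n (fun j ↦ w j) = ∑ j, (e n (w j) : R) • u j := by
  simp only [reesEval, decompose_coe, of_eq_same]

theorem reesEval_of_mem_of_ne {v : Fin g → A} {d n : ℕ} (hv : ∀ j, v j ∈ 𝒜 d) (hdn : d ≠ n) :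
    reesEval e u n v = 0 :=
  Finset.sum_eq_zero fun j _ ↦ by
    rw [show decompose 𝒜 (v j) n = 0 from Subtype.ext (decompose_of_mem_ne 𝒜 (hv j) hdn),
      map_zero, ZeroMemClass.coe_zero, zero_smul]

variable {e} in
theorem reesEval_smul_of_mem (he : IsReesAlgebraEquiv e) {i : ℕ} (y : 𝒜 i) (n : ℕ)
    (v : Fin g → A) :
    reesEval e u (i + n) ((y : A) • v) = (e i y : R) • reesEval e u n v := by
  rw [reesEval, reesEval, Finset.smul_sum]
  refine Finset.sum_congr rfl fun j _ ↦ ?_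
  have hdec : decompose 𝒜 ((y : A) * v j) (i + n) =
      ⟨y * decompose 𝒜 (v j) n, SetLike.mul_mem_graded y.2 (decompose 𝒜 (v j) n).2⟩ :=
    Subtype.ext (coe_decompose_mul_add_of_left_mem 𝒜 y.2)
  rw [Pi.smul_apply, smul_eq_mul, hdec, he, mul_smul]

theorem reesEval_smul_of_not_le {y : A} {i n : ℕ} (hy : y ∈ 𝒜 i) (hin : ¬i ≤ n)
    (v : Fin g → A) : reesEval e u n (y • v) = 0 :=
  Finset.sum_eq_zero fun j _ ↦ by
    rw [show decompose 𝒜 ((y • v) j) n = 0 from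
        Subtype.ext (coe_decompose_mul_of_left_mem_of_not_le 𝒜 hy hin),
      map_zero, ZeroMemClass.coe_zero, zero_smul]

variable {e} in
theorem reesEval_mem_of_mem_span (he : IsReesAlgebraEquiv e) {F : ℕ → Submodule R M}
    (hF : ∀ i n, ∀ r ∈ idealPow I i, ∀ z ∈ F n, r • z ∈ F (i + n))
    {S : Set (Fin g → A)} (hS : ∀ v ∈ S, ∀ n, reesEval e u n v ∈ F n)
    {x : Fin g → A} (hx : x ∈ Submodule.span A S) (n : ℕ) : reesEval e u n x ∈ F n := by
  induction hx using Submodule.span_induction generalizing n with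
  | mem v hv => exact hS v hv n
  | zero => exact reesEval_zero e u n ▸ zero_mem _
  | add x y _ _ hx hy => exact reesEval_add e u n x y ▸ add_mem (hx n) (hy n)
  | smul a x _ hx =>
    induction a using DirectSum.Decomposition.inductionOn 𝒜 generalizing n with
    | zero => exact (zero_smul A x).symm ▸ reesEval_zero e u n ▸ zero_mem _
    | @homogeneous i y =>
      by_cases hin : i ≤ n
      · obtain ⟨n, rfl⟩ := Nat.exists_eq_add_of_le hin
        rw [reesEval_smul_of_mem u he]
        exact hF i n _ (e i y).2 _ (hx n)
      · rw [reesEval_smul_of_not_le e u y.2 hin]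
        exact zero_mem _
    | add a b ha hb => exact (add_smul a b x).symm ▸ reesEval_add e u n _ _ ▸ add_mem (ha n) (hb n)

def homogeneousRelations (T : Submodule R M) (d : ℕ) : Set (Fin g → A) :=
  {v | (∀ j, v j ∈ 𝒜 d) ∧ reesEval e u d v ∈ T}

def relationsOfDegreeLE (T : Submodule R M) : ℕ →o Submodule A (Fin g → A) where
  toFun c := Submodule.span A (⋃ d ≤ c, homogeneousRelations e u T d)
  monotone' _ _ hcc' := Submodule.span_mono <| Set.biUnion_mono (fun _ hd ↦ le_trans hd hcc')
    fun _ _ ↦ le_rfl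

theorem exists_span_homogeneousRelations_eq (h𝒜 : ∀ J : Ideal A, J.IsHomogeneous 𝒜 → J.FG)
    (T : Submodule R M) :
    ∃ c, Submodule.span A (⋃ d, homogeneousRelations e u T d) = relationsOfDegreeLE e u T c := by
  refine (Submodule.fg_of_forall_proj_comp_mem h𝒜 _ fun x hx ↦
    Submodule.proj_comp_mem_span ?_ hx).stabilizes_of_iSup_eq _ ?_
  · intro v hv
    obtain ⟨d, hd⟩ := Set.mem_iUnion.mp hv
    exact ⟨d, hd.1⟩
  · refine le_antisymm (iSup_le fun c ↦ Submodule.span_mono ?_) (Submodule.span_le.mpr ?_)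
    · exact Set.iUnion₂_subset fun d _ ↦ Set.subset_iUnion _ d
    · exact Set.iUnion_subset fun d v hv ↦
        Submodule.mem_iSup_of_mem d (Submodule.subset_span (Set.mem_iUnion₂.mpr ⟨d, le_rfl, hv⟩))

variable {e} in
theorem reesEval_mem_pow_sub_smul [I.IsTwoSided] (he : IsReesAlgebraEquiv e)
    {T : Submodule R M} {c : ℕ}
    (hc : Submodule.span A (⋃ d, homogeneousRelations e u T d) = relationsOfDegreeLE e u T c)
    {n : ℕ} {v : Fin g → A} (hv : ∀ j, v j ∈ 𝒜 n) (hT : reesEval e u n v ∈ T) :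
    reesEval e u n v ∈ I ^ (n - c) • T := by
  have hvc : v ∈ relationsOfDegreeLE e u T c :=
    hc ▸ Submodule.subset_span (Set.mem_iUnion.mpr ⟨n, hv, hT⟩)
  refine reesEval_mem_of_mem_span u he (F := fun n ↦ I ^ (n - c) • T) ?_ ?_ hvc n
  · exact fun i n r hr z hz ↦ I.smul_mem_pow_add_sub_smul (idealPow_eq_pow I i ▸ hr) hz
  · intro w hw m
    obtain ⟨d, hdc, hwd, hwT⟩ := Set.mem_iUnion₂.mp hw
    by_cases hdm : d = m
    · subst hdm
      rwa [Nat.sub_eq_zero_of_le hdc, Submodule.pow_zero, Ideal.one_eq_top, Submodule.top_smul]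
    · exact reesEval_of_mem_of_ne e u hwd hdm ▸ zero_mem _

end ReesEval

theorem exists_pow_smul_top_inf_le {R A M : Type*} [Ring R] [Ring A] [AddCommGroup M]
    [Module R M] [Module.Finite R M] {I : Ideal R} [I.IsTwoSided] {𝒜 : ℕ → AddSubgroup A}
    [GradedRing 𝒜] {e : ∀ n, 𝒜 n ≃+ idealPow I n} (he : IsReesAlgebraEquiv e)
    (h𝒜 : ∀ J : Ideal A, J.IsHomogeneous 𝒜 → J.FG) (T : Submodule R M) :
    ∃ c, ∀ n, I ^ n • ⊤ ⊓ T ≤ I ^ (n - c) • T := by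
  obtain ⟨g, u, hu⟩ := Module.Finite.exists_fin (R := R) (M := M)
  obtain ⟨c, hc⟩ := exists_span_homogeneousRelations_eq e u h𝒜 T
  refine ⟨c, fun n m ⟨hm, hmT⟩ ↦ ?_⟩
  rw [← hu, SetLike.mem_coe, Submodule.mem_ideal_smul_span_iff_exists_sum] at hm
  obtain ⟨a, ha, rfl⟩ := hm
  let w : Fin g → 𝒜 n := fun j ↦ (e n).symm ⟨a j, idealPow_eq_pow I n ▸ ha j⟩
  have hw : reesEval e u n (fun j ↦ w j) = a.sum fun j r ↦ r • u j := by
    simp [reesEval_of_mem, w, Finsupp.sum_fintype]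
  rw [← hw] at hmT ⊢
  exact reesEval_mem_pow_sub_smul u he hc (fun j ↦ (w j).2) hmT

/-- Let `R` be a left Noetherian ring, `I` a two-sided ideal, and suppose the
Rees algebra `R* = ⊕_{n≥0} Iⁿ` (given as an abstract graded ring `A` whose graded pieces are
identified with the powers `Iⁿ` compatibly with multiplication) is graded left Noetherian.
Then for every finitely generated left `R`-module `M` there is a submodule `N ⊆ M` — in fact
`N = I^s M` for `s` large — with no nonzero `I`-torsion elements and with `M/N` `I`-torsion. -/
theorem torsionfree_submodule_of_rees_noetherian
    (R : Type*) [Ring R] [IsNoetherianRing R]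
    (I : Ideal R) (hI : ∀ a ∈ I, ∀ r : R, a * r ∈ I)
    (A : Type*) [Ring A] (𝒜 : ℕ → AddSubgroup A) [GradedRing 𝒜]
    (e : ∀ n : ℕ, ↥(𝒜 n) ≃+ ↥(idealPow I n))
    (he_mul : ∀ (m n : ℕ) (x : ↥(𝒜 m)) (y : ↥(𝒜 n)),
      ((e (m + n) (⟨(x : A) * (y : A), SetLike.mul_mem_graded x.2 y.2⟩ : ↥(𝒜 (m + n)))
          : ↥(idealPow I (m + n))) : R) =
        ((e m x : ↥(idealPow I m)) : R) * ((e n y : ↥(idealPow I n)) : R))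
    (hgradedNoeth : ∀ J : Ideal A, Ideal.IsHomogeneous 𝒜 J → J.FG)
    (M : Type*) [AddCommGroup M] [Module R M] [Module.Finite R M] :
    ∃ s : ℕ, ∀ N : Submodule R M,
      N = Submodule.span R {z : M | ∃ r ∈ idealPow I s, ∃ m : M, z = r • m} →
      (∀ m ∈ N, (∃ n : ℕ, 0 < n ∧ ∀ r ∈ idealPow I n, r • m = 0) → m = 0) ∧
      (∀ mq : M ⧸ N, ∃ n : ℕ, 0 < n ∧ ∀ r ∈ idealPow I n, r • mq = 0) := by
  have : I.IsTwoSided := ⟨fun b ha ↦ hI _ ha b⟩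
  obtain ⟨c, hc⟩ := exists_pow_smul_top_inf_le he_mul hgradedNoeth (I.torsion M)
  obtain ⟨k, hk⟩ := I.exists_torsion_eq_powTorsion M
  simp only [idealPow_eq_pow]
  refine ⟨c + k, fun N hN ↦ ⟨fun m hmN ⟨n, _, hm⟩ ↦ ?_, fun mq ↦ ?_⟩⟩
  · have hNle : N ≤ I ^ (c + k) • ⊤ := hN ▸ Submodule.span_le.mpr fun _ ⟨r, hr, m, hz⟩ ↦
      hz ▸ Submodule.smul_mem_smul hr Submodule.mem_top
    have hmk := hc (c + k) ⟨hNle hmN, Submodule.mem_iSup_of_mem n hm⟩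
    rwa [Nat.add_sub_cancel_left, hk, Ideal.pow_smul_powTorsion, Submodule.mem_bot] at hmk
  · obtain ⟨m, rfl⟩ := Submodule.Quotient.mk_surjective N mq
    refine ⟨c + k + 1, Nat.succ_pos _, fun r hr ↦ ?_⟩
    rw [← Submodule.Quotient.mk_smul, Submodule.Quotient.mk_eq_zero, hN]
    exact Submodule.subset_span ⟨r, Ideal.pow_le_pow_right (Nat.le_succ _) hr, m, rfl⟩
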